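/- arXiv:1912.10907 — 3 statements merged into one kernel-verified Lean document; each statement's English description precedes it below -/
import Mathlib

section
/- The entropy Z(p) := k₁·log(1 + log(∑_i p_i^α)/(k₁(1−α))) satisfies Z(p⊗q) = k₁·log(exp(Z(p)/k₁) + exp(Z(q)/k₁) − 1) for strictly positive probability vectors p, q, with k₁ > 0 and 0 < α < 1. -/
theorem stmt_14 (k₁ α : ℝ) (hk : 0 < k₁) (hα0 : 0 < α) (hα1 : α < 1)
    (W V : ℕ) (p : Fin W → ℝ) (q : Fin V → ℝ)
    (hp : ∀ i, 0 < p i) (hq : ∀ j, 0 < q j)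
    (hps : ∑ i, p i = 1) (hqs : ∑ j, q j = 1)
    (Zp Zq Zpq : ℝ)
    (hZp : Zp = k₁ * Real.log (1 + (1 / (k₁ * (1 - α))) * Real.log (∑ i, p i ^ α)))
    (hZq : Zq = k₁ * Real.log (1 + (1 / (k₁ * (1 - α))) * Real.log (∑ j, q j ^ α)))
    (hZpq : Zpq = k₁ * Real.log (1 + (1 / (k₁ * (1 - α))) *
      Real.log (∑ ij : Fin W × Fin V, (p ij.1 * q ij.2) ^ α))) :
    Zpq = k₁ * Real.log (Real.exp (Zp / k₁) + Real.exp (Zq / k₁) - 1) := by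
  set c : ℝ := 1 / (k₁ * (1 - α)) with hc
  have hc0 : 0 < c := by
    apply div_pos one_pos
    exact mul_pos hk (by linarith)
  have key : ∀ (n : ℕ) (r : Fin n → ℝ), (∀ i, 0 < r i) → (∑ i, r i = 1) →
      1 ≤ ∑ i, r i ^ α := by
    intro n r hr hrs
    rw [← hrs]
    apply Finset.sum_le_sum
    intro i _
    have h1 : r i ≤ 1 := by
      rw [← hrs]
      exact Finset.single_le_sum (fun j _ => (hr j).le) (Finset.mem_univ i)
    calc r i = r i ^ (1 : ℝ) := (Real.rpow_one _).symm
      _ ≤ r i ^ α := Real.rpow_le_rpow_of_exponent_ge (hr i) h1 hα1.le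
  have hA1 := key W p hp hps
  have hB1 := key V q hq hqs
  have hAlog : 0 ≤ Real.log (∑ i, p i ^ α) := Real.log_nonneg hA1
  have hBlog : 0 ≤ Real.log (∑ j, q j ^ α) := Real.log_nonneg hB1
  have hApos : 0 < ∑ i, p i ^ α := lt_of_lt_of_le one_pos hA1
  have hBpos : 0 < ∑ j, q j ^ α := lt_of_lt_of_le one_pos hB1
  have hexp : ∀ x : ℝ, Real.exp ((k₁ * Real.log (1 + c * x)) / k₁) = 1 + c * x ∨ True :=
    fun _ => Or.inr trivial
  have hsum : (∑ ij : Fin W × Fin V, (p ij.1 * q ij.2) ^ α)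
      = (∑ i, p i ^ α) * (∑ j, q j ^ α) := by
    rw [Finset.sum_mul_sum, Fintype.sum_prod_type]
    exact Finset.sum_congr rfl fun i _ => Finset.sum_congr rfl fun j _ =>
      Real.mul_rpow (hp i).le (hq j).le
  have hexpp : Real.exp (Zp / k₁) = 1 + c * Real.log (∑ i, p i ^ α) := by
    rw [hZp, mul_comm, mul_div_assoc, div_self hk.ne', mul_one, Real.exp_log]
    positivity
  have hexpq : Real.exp (Zq / k₁) = 1 + c * Real.log (∑ j, q j ^ α) := by
    rw [hZq, mul_comm, mul_div_assoc, div_self hk.ne', mul_one, Real.exp_log]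
    positivity
  rw [hZpq, hsum, Real.log_mul hApos.ne' hBpos.ne', hexpp, hexpq]
  ring_nf
end

section
/- For a, b > 0 and r ∈ ℝ, the function f(x) = 2(e^{rx} − 1)/(−a(e^{rx} − 1) + √(a²+4b)·(e^{rx} + 1)) satisfies the functional equation f(x+y) = (f(x) + f(y) + a·f(x)f(y))/(1 + b·f(x)f(y)) for all real x, y. -/
theorem stmt_15 (a b r : ℝ) (ha : 0 < a) (hb : 0 < b)
    (f : ℝ → ℝ)
    (hf : ∀ x, f x = 2 * (Real.exp (r * x) - 1) /
      (-a * (Real.exp (r * x) - 1) + Real.sqrt (a ^ 2 + 4 * b) * (Real.exp (r * x) + 1))) :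
    ∀ x y : ℝ, f (x + y) = (f x + f y + a * f x * f y) / (1 + b * f x * f y) := by
  intro x y
  set s := Real.sqrt (a ^ 2 + 4 * b) with hs
  have hs2 : s ^ 2 = a ^ 2 + 4 * b := Real.sq_sqrt (by positivity)
  have hsnn : 0 ≤ s := Real.sqrt_nonneg _
  have hsa : a < s := by nlinarith
  have hspos : 0 < s := lt_trans ha hsa
  set u := Real.exp (r * x) with hu
  set v := Real.exp (r * y) with hv
  have hupos : 0 < u := Real.exp_pos _
  have hvpos : 0 < v := Real.exp_pos _
  have h1 : f x = 2 * (u - 1) / (-a * (u - 1) + s * (u + 1)) := hf x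
  have h2 : f y = 2 * (v - 1) / (-a * (v - 1) + s * (v + 1)) := hf y
  have h3 : f (x + y) = 2 * (u * v - 1) / (-a * (u * v - 1) + s * (u * v + 1)) := by
    rw [hf (x + y), mul_add, Real.exp_add]
  have hDu : 0 < -a * (u - 1) + s * (u + 1) := by nlinarith
  have hDv : 0 < -a * (v - 1) + s * (v + 1) := by nlinarith
  have hDuv : 0 < -a * (u * v - 1) + s * (u * v + 1) := by
    nlinarith [mul_pos (sub_pos.mpr hsa) (mul_pos hupos hvpos)]
  have hb' : b = (s ^ 2 - a ^ 2) / 4 := by linarith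
  set P := -a * (u - 1) + s * (u + 1) with hP
  set Q := -a * (v - 1) + s * (v + 1) with hQ
  set R := -a * (u * v - 1) + s * (u * v + 1) with hR
  have hnum : f x + f y + a * f x * f y = 4 * s * (u * v - 1) / (P * Q) := by
    rw [h1, h2]
    field_simp
    rw [hP, hQ]
    ring
  have hden : 1 + b * f x * f y = 2 * s * R / (P * Q) := by
    rw [h1, h2, hb']
    field_simp
    rw [hP, hQ, hR]
    ring
  rw [h3, hnum, hden, div_div_div_comm, div_self (by positivity : P * Q ≠ 0), div_one]
  rw [div_eq_div_iff hDuv.ne' (by positivity)]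
  ring
end

section
/- For a, b > 0 and r ∈ ℝ, the function f(x) = 2(x^r − 1)/(−a(x^r − 1) + √(a²+4b)·(x^r + 1)) satisfies f(x·y) = (f(x) + f(y) + a·f(x)f(y))/(1 + b·f(x)f(y)) for all x, y > 0. -/
theorem stmt_16 (a b r : ℝ) (ha : 0 < a) (hb : 0 < b)
    (f : ℝ → ℝ)
    (hf : ∀ x, f x = 2 * (x ^ r - 1) /
      (-a * (x ^ r - 1) + Real.sqrt (a ^ 2 + 4 * b) * (x ^ r + 1))) :
    ∀ x y : ℝ, 0 < x → 0 < y →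
      f (x * y) = (f x + f y + a * f x * f y) / (1 + b * f x * f y) := by
  intro x y hx hy
  set s := Real.sqrt (a ^ 2 + 4 * b) with hs_def
  have hpos : (0:ℝ) < a ^ 2 + 4 * b := by positivity
  have hs2 : s ^ 2 = a ^ 2 + 4 * b := Real.sq_sqrt hpos.le
  have hs0 : 0 < s := Real.sqrt_pos.mpr hpos
  have hsa : a < s := by nlinarith
  have hu : 0 < x ^ r := Real.rpow_pos_of_pos hx r
  have hv : 0 < y ^ r := Real.rpow_pos_of_pos hy r
  set u := x ^ r
  set v := y ^ r
  have hxy : (x * y) ^ r = u * v := Real.mul_rpow hx.le hy.le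
  rw [hf (x * y), hf x, hf y, hxy]
  set Du := -a * (u - 1) + s * (u + 1) with hDu_def
  set Dv := -a * (v - 1) + s * (v + 1) with hDv_def
  set Duv := -a * (u * v - 1) + s * (u * v + 1) with hDuv_def
  have hDu : 0 < Du := by rw [hDu_def]; nlinarith
  have hDv : 0 < Dv := by rw [hDv_def]; nlinarith
  have hDuv : 0 < Duv := by rw [hDuv_def]; nlinarith [mul_pos hu hv]
  have e1 : 2 * (u - 1) / Du + 2 * (v - 1) / Dv +
      a * (2 * (u - 1) / Du) * (2 * (v - 1) / Dv) =
      (4 * s * (u * v - 1)) / (Du * Dv) := by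
    field_simp
    rw [hDu_def, hDv_def]
    ring
  have e2 : 1 + b * (2 * (u - 1) / Du) * (2 * (v - 1) / Dv) =
      (2 * s * Duv) / (Du * Dv) := by
    field_simp
    rw [hDu_def, hDv_def, hDuv_def]
    linear_combination (-(u * v - u - v + 1)) * hs2
  rw [e1, e2, div_div_div_eq]
  rw [div_eq_div_iff hDuv.ne'
    (by positivity : (0:ℝ) < Du * Dv * (2 * s * Duv)).ne']
  ring
end
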